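/- For every y ≠ 0, for all t > 0 and all x < 0, the function G satisfies the heat equation with coefficient a₁/2 in the left half-line: ∂G/∂t(t,x,y) = (a₁/2)·∂²G/∂x²(t,x,y), where the derivatives are the usual partial derivatives of the explicit function (t,x) ↦ G(t,x,y) on (0,∞) × (−∞,0). -/

import Mathlib

/-!
On the left half-line `f ξ = ξ / √a₁`, so `(|f ξ| + |f y|)² = (ξ / √a₁ - |f y|)²` and `G` is a
linear combination of the Gaussian heat kernel `exp (-u² / 2t) / √(2πt)` at the source
`u = ξ / √a₁ - f y` and at its mirror image `u = ξ / √a₁ - |f y|`. The Gaussian kernel solves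
`∂ₜ p = ½ ∂ᵤ² p`, and the change of variable `u = ξ / √a₁ - b` turns this into `∂ₜ = (a₁/2) ∂ξ²`.
-/

open Real Set Filter MeasureTheory

noncomputable def fPiece (a₁ a₂ y : ℝ) : ℝ :=
  if y ≤ 0 then y / Real.sqrt a₁ else y / Real.sqrt a₂

noncomputable def signFun (y : ℝ) : ℝ :=
  if 0 < y then 1 else if y < 0 then -1 else 0

noncomputable def G (a₁ a₂ β t x y : ℝ) : ℝ :=
  (1 / Real.sqrt (2 * Real.pi * t)) *
    (if y ≤ 0 then 1 / Real.sqrt a₁ else 1 / Real.sqrt a₂) *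
    (Real.exp (-(fPiece a₁ a₂ x - fPiece a₁ a₂ y) ^ 2 / (2 * t)) +
      β * signFun y * Real.exp (-(|fPiece a₁ a₂ x| + |fPiece a₁ a₂ y|) ^ 2 / (2 * t)))

open scoped Topology

noncomputable def heatKernel (t u : ℝ) : ℝ :=
  exp (-u ^ 2 / (2 * t)) / √(2 * π * t)

def SolvesHeatEquationAt (κ : ℝ) (w : ℝ → ℝ → ℝ) (t x : ℝ) : Prop :=
  DifferentiableAt ℝ (fun τ => w τ x) t ∧
    DifferentiableAt ℝ (fun ξ => w t ξ) x ∧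
    DifferentiableAt ℝ (deriv fun ξ => w t ξ) x ∧
    deriv (fun τ => w τ x) t = κ * deriv (deriv fun ξ => w t ξ) x

theorem SolvesHeatEquationAt.congr {κ t x : ℝ} {v w : ℝ → ℝ → ℝ}
    (hv : SolvesHeatEquationAt κ v t x) (h : ∀ᶠ ξ in 𝓝 x, ∀ τ, w τ ξ = v τ ξ) :
    SolvesHeatEquationAt κ w t x := by
  have htime : (fun τ => w τ x) = fun τ => v τ x := funext h.self_of_nhds
  have hspace : (fun ξ => w t ξ) =ᶠ[𝓝 x] fun ξ => v t ξ := h.mono fun ξ hξ => hξ t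
  obtain ⟨hdt, hdx, hdxx, heq⟩ := hv
  refine ⟨htime ▸ hdt, hspace.differentiableAt_iff.2 hdx,
    hspace.deriv.differentiableAt_iff.2 hdxx, ?_⟩
  rw [htime, heq, hspace.deriv.deriv_eq]

theorem HasDerivAt.comp_div_sub_const {f : ℝ → ℝ} {f' s b x : ℝ}
    (hf : HasDerivAt f f' (x / s - b)) : HasDerivAt (fun ξ => f (ξ / s - b)) (f' / s) x :=
  (hf.comp x (((hasDerivAt_id x).div_const s).sub_const b)).congr_deriv (mul_one_div f' s)

theorem hasDerivAt_heatKernel (t u : ℝ) :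
    HasDerivAt (heatKernel t) (heatKernel t u * (-u / t)) u := by
  have h := (((hasDerivAt_pow 2 u).const_mul (-1 / (2 * t))).exp).div_const (√(2 * π * t))
  have hK : heatKernel t = fun v => exp (-1 / (2 * t) * v ^ 2) / √(2 * π * t) :=
    funext fun v => by simp only [heatKernel]; ring_nf
  rw [hK]
  refine h.congr_deriv ?_
  field_simp
  ring

theorem deriv_heatKernel (t : ℝ) :
    deriv (heatKernel t) = fun u => heatKernel t u * (-u / t) :=
  funext fun u => (hasDerivAt_heatKernel t u).deriv

theorem hasDerivAt_deriv_heatKernel (t u : ℝ) :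
    HasDerivAt (deriv (heatKernel t)) (heatKernel t u * (u ^ 2 / t ^ 2 - 1 / t)) u := by
  rw [deriv_heatKernel]
  refine ((hasDerivAt_heatKernel t u).mul ((hasDerivAt_id u).neg.div_const t)).congr_deriv ?_
  simp only [Pi.neg_apply, id_eq]
  ring

theorem differentiable_heatKernel (t : ℝ) : Differentiable ℝ (heatKernel t) :=
  fun u => (hasDerivAt_heatKernel t u).differentiableAt

theorem differentiable_deriv_heatKernel (t : ℝ) : Differentiable ℝ (deriv (heatKernel t)) :=
  fun u => (hasDerivAt_deriv_heatKernel t u).differentiableAt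

theorem hasDerivAt_heatKernel_time {t : ℝ} (ht : 0 < t) (u : ℝ) :
    HasDerivAt (fun τ => heatKernel τ u) (deriv (deriv (heatKernel t)) u / 2) t := by
  have h2πt : 0 < 2 * π * t := by positivity
  have hS : √(2 * π * t) ≠ 0 := (sqrt_pos.2 h2πt).ne'
  have hsq : √(2 * π * t) ^ 2 = 2 * π * t := sq_sqrt h2πt.le
  have hexp := ((hasDerivAt_inv ht.ne').const_mul (-u ^ 2 / 2)).exp
  have hsqrt := ((hasDerivAt_id t).const_mul (2 * π)).sqrt h2πt.ne'
  refine (hexp.div hsqrt hS).congr_of_eventuallyEq ?_ |>.congr_deriv ?_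
  · exact Eventually.of_forall fun τ => by simp only [heatKernel, id, Pi.div_apply]; ring_nf
  · rw [(hasDerivAt_deriv_heatKernel t u).deriv]
    simp only [heatKernel, id]
    set S := √(2 * π * t)
    field_simp
    linear_combination t * hsq

theorem solvesHeatEquationAt_heatKernel_combination (A B s c m : ℝ) (hs : s ≠ 0) {t : ℝ}
    (ht : 0 < t) (x : ℝ) :
    SolvesHeatEquationAt (s ^ 2 / 2)
      (fun τ ξ => A * heatKernel τ (ξ / s - c) + B * heatKernel τ (ξ / s - m)) t x := by
  set K := heatKernel t
  have hspace (ξ : ℝ) : HasDerivAt (fun ξ => A * K (ξ / s - c) + B * K (ξ / s - m))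
      (A * (deriv K (ξ / s - c) / s) + B * (deriv K (ξ / s - m) / s)) ξ :=
    ((differentiable_heatKernel t _).hasDerivAt.comp_div_sub_const.const_mul A).add
      ((differentiable_heatKernel t _).hasDerivAt.comp_div_sub_const.const_mul B)
  have hspace2 : HasDerivAt (deriv fun ξ => A * K (ξ / s - c) + B * K (ξ / s - m))
      (A * (deriv (deriv K) (x / s - c) / s / s) +
        B * (deriv (deriv K) (x / s - m) / s / s)) x := by
    rw [funext fun ξ => (hspace ξ).deriv]
    have hK' (b : ℝ) : HasDerivAt (fun ξ => deriv K (ξ / s - b) / s)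
        (deriv (deriv K) (x / s - b) / s / s) x :=
      (differentiable_deriv_heatKernel t _).hasDerivAt.comp_div_sub_const.div_const s
    exact ((hK' c).const_mul A).add ((hK' m).const_mul B)
  have htime : HasDerivAt (fun τ => A * heatKernel τ (x / s - c) + B * heatKernel τ (x / s - m))
      (A * (deriv (deriv K) (x / s - c) / 2) + B * (deriv (deriv K) (x / s - m) / 2)) t :=
    ((hasDerivAt_heatKernel_time ht _).const_mul A).add
      ((hasDerivAt_heatKernel_time ht _).const_mul B)
  refine ⟨htime.differentiableAt, (hspace x).differentiableAt, hspace2.differentiableAt, ?_⟩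
  rw [htime.deriv, hspace2.deriv]
  field_simp

theorem G_eq_heatKernel_combination_of_nonpos (a₁ a₂ β τ y : ℝ) {ξ : ℝ} (hξ : ξ ≤ 0) :
    G a₁ a₂ β τ ξ y =
      (if y ≤ 0 then 1 / √a₁ else 1 / √a₂) * heatKernel τ (ξ / √a₁ - fPiece a₁ a₂ y) +
        (if y ≤ 0 then 1 / √a₁ else 1 / √a₂) * (β * signFun y) *
          heatKernel τ (ξ / √a₁ - |fPiece a₁ a₂ y|) := by
  have hf : fPiece a₁ a₂ ξ = ξ / √a₁ := if_pos hξ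
  have habs : |ξ / √a₁| = -(ξ / √a₁) :=
    abs_of_nonpos (div_nonpos_of_nonpos_of_nonneg hξ (sqrt_nonneg _))
  simp only [G, heatKernel, hf, habs]
  ring_nf

theorem G_heat_equation_left_general (a₁ a₂ β : ℝ)
    (ha₁ : 0 < a₁)
    (y : ℝ) (t : ℝ) (ht : 0 < t) (x : ℝ) (hx : x < 0) :
    DifferentiableAt ℝ (fun τ => G a₁ a₂ β τ x y) t ∧
    DifferentiableAt ℝ (fun ξ => G a₁ a₂ β t ξ y) x ∧
    DifferentiableAt ℝ (deriv (fun ξ => G a₁ a₂ β t ξ y)) x ∧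
    deriv (fun τ => G a₁ a₂ β τ x y) t =
      (a₁ / 2) * deriv (deriv (fun ξ => G a₁ a₂ β t ξ y)) x := by
  show SolvesHeatEquationAt (a₁ / 2) (fun τ ξ => G a₁ a₂ β τ ξ y) t x
  rw [show a₁ / 2 = √a₁ ^ 2 / 2 by rw [sq_sqrt ha₁.le]]
  set A := if y ≤ 0 then 1 / √a₁ else 1 / √a₂
  refine (solvesHeatEquationAt_heatKernel_combination A (A * (β * signFun y)) √a₁
    (fPiece a₁ a₂ y) |fPiece a₁ a₂ y| (sqrt_pos.2 ha₁).ne' ht x).congr ?_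
  filter_upwards [Iio_mem_nhds hx] with ξ hξ τ
  exact G_eq_heatKernel_combination_of_nonpos a₁ a₂ β τ y hξ.le

theorem G_heat_equation_left (a₁ a₂ ρ₁ ρ₂ α β : ℝ)
    (ha₁ : 0 < a₁) (ha₂ : 0 < a₂) (hρ₁ : 0 < ρ₁) (hρ₂ : 0 < ρ₂)
    (hα : α = 1 - ρ₁ * a₁ / (ρ₂ * a₂))
    (hβ : β = (Real.sqrt a₁ + Real.sqrt a₂ * (α - 1)) /
      (Real.sqrt a₁ - Real.sqrt a₂ * (α - 1)))
    (y : ℝ) (hy : y ≠ 0) (t : ℝ) (ht : 0 < t) (x : ℝ) (hx : x < 0) :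
    DifferentiableAt ℝ (fun τ => G a₁ a₂ β τ x y) t ∧
    DifferentiableAt ℝ (fun ξ => G a₁ a₂ β t ξ y) x ∧
    DifferentiableAt ℝ (deriv (fun ξ => G a₁ a₂ β t ξ y)) x ∧
    deriv (fun τ => G a₁ a₂ β τ x y) t =
      (a₁ / 2) * deriv (deriv (fun ξ => G a₁ a₂ β t ξ y)) x :=
  G_heat_equation_left_general a₁ a₂ β ha₁ y t ht x hx
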